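/- arXiv:2407.09356 — 4 statements merged into one kernel-verified Lean document; each statement's English description precedes it below -/
import Mathlib

section
/- Let G be a graph, S* an optimal odd cycle transversal of G, 𝒞 a collection of pairwise vertex-disjoint subsets of V(G) each inducing a K₄ in G, and let S be an odd cycle transversal of G − V(𝒞) with |S| ≤ ρ · opt(G − V(𝒞)) for some ρ ≥ 2. Then S ∪ V(𝒞) is an odd cycle transversal of G and |S ∪ V(𝒞)| ≤ max{2, ρ} · |S*|. -/
open Finset

def IsOCT {V : Type*} (G : SimpleGraph V) (S : Set V) : Prop :=
  (G.induce Sᶜ).Colorable 2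

def IsTriangle {V : Type*} (G : SimpleGraph V) (T : Finset V) : Prop :=
  T.card = 3 ∧ ∀ u ∈ T, ∀ v ∈ T, u ≠ v → G.Adj u v

def IsK4 {V : Type*} (G : SimpleGraph V) (K : Finset V) : Prop :=
  K.card = 4 ∧ ∀ u ∈ K, ∀ v ∈ K, u ≠ v → G.Adj u v

def IsPacking {V : Type*} (𝒯 : Finset (Finset V)) : Prop :=
  (𝒯 : Set (Finset V)).Pairwise fun A B => Disjoint A B

lemma oct_mono {V : Type*} (G : SimpleGraph V) {A B : Set V} (h : A ⊆ B)
    (hA : IsOCT G A) : IsOCT G B := by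
  obtain ⟨c⟩ := hA
  exact ⟨SimpleGraph.Coloring.mk
    (fun v => c ⟨v.1, fun hv => v.2 (h hv)⟩)
    (fun {u v} huv => c.valid huv)⟩

lemma two_le_inter {V : Type*} [DecidableEq V] (G : SimpleGraph V)
    (Sstar : Finset V) (hSstar : IsOCT G ↑Sstar)
    {K : Finset V} (hK : IsK4 G K) : 2 ≤ (Sstar ∩ K).card := by
  by_contra hlt
  push_neg at hlt
  have hT : 3 ≤ (K \ Sstar).card := by
    have h1 := Finset.card_sdiff_add_card_inter K Sstar
    have h2 : (K ∩ Sstar).card = (Sstar ∩ K).card := by rw [Finset.inter_comm]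
    have h3 := hK.1
    omega
  obtain ⟨c⟩ := hSstar
  let f : {y // y ∈ K \ Sstar} → ((↑Sstar : Set V)ᶜ : Set V) := fun x =>
    ⟨x.1, by
      have := x.2
      simp only [Finset.mem_sdiff] at this
      simpa using this.2⟩
  have hmaps : ∀ x ∈ (K \ Sstar).attach,
      c (f x) ∈ (Finset.univ : Finset (Fin 2)) := fun x _ => Finset.mem_univ _
  have hcard : (Finset.univ : Finset (Fin 2)).card < (K \ Sstar).attach.card := by
    simp [Finset.card_attach]; omega
  obtain ⟨x, _, y, _, hxy, heq⟩ :=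
    Finset.exists_ne_map_eq_of_card_lt_of_maps_to hcard hmaps
  have hx : x.1 ∈ K := (Finset.mem_sdiff.mp x.2).1
  have hy : y.1 ∈ K := (Finset.mem_sdiff.mp y.2).1
  have hne : x.1 ≠ y.1 := fun h => hxy (Subtype.ext h)
  have hadj : (G.induce ((↑Sstar : Set V)ᶜ)).Adj (f x) (f y) :=
    hK.2 _ hx _ hy hne
  exact c.valid hadj heq

theorem stmt0 {V : Type*} [DecidableEq V] [Fintype V] (G : SimpleGraph V)
    (Sstar : Finset V) (hSstar : IsOCT G ↑Sstar)
    (hSstarOpt : ∀ S' : Finset V, IsOCT G ↑S' → Sstar.card ≤ S'.card)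
    (𝒞 : Finset (Finset V)) (h𝒞 : ∀ C ∈ 𝒞, IsK4 G C) (hpack : IsPacking 𝒞)
    (S : Finset V) (hdisj : Disjoint S (𝒞.biUnion id))
    (hS : IsOCT G ↑(S ∪ 𝒞.biUnion id))
    (ρ : ℝ) (hρ : 2 ≤ ρ)
    (opt' : ℕ)
    (hopt'ex : ∃ S' : Finset V, Disjoint S' (𝒞.biUnion id) ∧
      IsOCT G ↑(S' ∪ 𝒞.biUnion id) ∧ S'.card = opt')
    (hopt'min : ∀ S' : Finset V, Disjoint S' (𝒞.biUnion id) →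
      IsOCT G ↑(S' ∪ 𝒞.biUnion id) → opt' ≤ S'.card)
    (happx : (S.card : ℝ) ≤ ρ * opt') :
    IsOCT G ↑(S ∪ 𝒞.biUnion id) ∧
      (((S ∪ 𝒞.biUnion id).card : ℝ) ≤ max 2 ρ * Sstar.card) := by
  refine ⟨hS, ?_⟩
  set B := 𝒞.biUnion id with hB
  have hdisjC : ∀ x ∈ 𝒞, ∀ y ∈ 𝒞, x ≠ y → Disjoint (id x) (id y) := by
    intro x hx y hy hxy; exact hpack hx hy hxy
  -- card of B
  have hBcard : B.card = 4 * 𝒞.card := by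
    rw [hB, Finset.card_biUnion hdisjC]
    simp only [id_eq]
    rw [Finset.sum_congr rfl (fun C hC => (h𝒞 C hC).1)]
    simp [Finset.sum_const, mul_comm]
  -- Sstar ∩ B has card ≥ 2 * 𝒞.card
  have hinter : 2 * 𝒞.card ≤ (Sstar ∩ B).card := by
    have : Sstar ∩ B = 𝒞.biUnion (fun C => Sstar ∩ C) := by
      ext v; simp [hB, Finset.mem_biUnion]; tauto
    rw [this, Finset.card_biUnion (fun x hx y hy hxy =>
      Finset.disjoint_left.mpr (fun a ha hb => by
        exact (Finset.disjoint_left.mp (hdisjC x hx y hy hxy))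
          (Finset.mem_of_mem_inter_right ha) (Finset.mem_of_mem_inter_right hb)))]
    calc 2 * 𝒞.card = ∑ _C ∈ 𝒞, 2 := by simp [mul_comm]
    _ ≤ ∑ C ∈ 𝒞, (Sstar ∩ C).card :=
      Finset.sum_le_sum (fun C hC => two_le_inter G Sstar hSstar (h𝒞 C hC))
  -- opt' ≤ (Sstar \ B).card
  have hopt : opt' ≤ (Sstar \ B).card := by
    apply hopt'min
    · exact Finset.sdiff_disjoint
    · apply oct_mono G (A := ↑Sstar)
      · intro v hv
        simp only [Finset.coe_union, Set.mem_union, Finset.mem_coe] at *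
        by_cases hvB : v ∈ B
        · exact Or.inr hvB
        · exact Or.inl (Finset.mem_sdiff.mpr ⟨hv, hvB⟩)
      · exact hSstar
  have hkey : opt' + 2 * 𝒞.card ≤ Sstar.card := by
    have := Finset.card_sdiff_add_card_inter Sstar B
    omega
  have hunion : (S ∪ B).card = S.card + B.card :=
    Finset.card_union_of_disjoint hdisj
  have hmax : max 2 ρ = ρ := max_eq_right hρ
  rw [hmax, hunion]
  push_cast
  have hkeyR : (opt' : ℝ) + 2 * 𝒞.card ≤ Sstar.card := by exact_mod_cast hkey
  have hBR : (B.card : ℝ) = 4 * 𝒞.card := by exact_mod_cast hBcard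
  have hc0 : (0:ℝ) ≤ 𝒞.card := Nat.cast_nonneg _
  have ho0 : (0:ℝ) ≤ opt' := Nat.cast_nonneg _
  nlinarith [mul_le_mul_of_nonneg_left hkeyR (by linarith : (0:ℝ) ≤ ρ)]
end

section
/- Let G be a graph, opt the minimum size of an odd cycle transversal of G, 𝒯 a collection of pairwise vertex-disjoint triangles in G with |𝒯| = a·opt, and let X₁ be an odd cycle transversal of G − V(𝒯) with |X₁| ≤ ρ₀ · opt(G − V(𝒯)). Then V(𝒯) ∪ X₁ is an odd cycle transversal of G of size at most (3a + ρ₀(1 − a)) · opt. -/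
open Finset

/-!
Every odd cycle transversal meets each triangle, so an optimal transversal `S` of `G` has at least
`|𝒯|` vertices in `V(𝒯)`, and `S \ V(𝒯)` is a transversal of `G - V(𝒯)`; hence
`opt(G - V(𝒯)) ≤ opt - |𝒯| = (1 - a) opt`. Adding the `3|𝒯| = 3a opt` vertices of `V(𝒯)` to the
`ρ₀`-approximate transversal `X₁` of `G - V(𝒯)` gives the bound.
-/

section

variable {V : Type*}

theorem IsOCT.mono {G : SimpleGraph V} {S S' : Set V} (h : S ⊆ S') (hS : IsOCT G S) :
    IsOCT G S' :=
  hS.of_hom (G.induceHomOfLE (Set.compl_subset_compl.mpr h)).toHom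

theorem IsTriangle.nonempty_inter_of_isOCT {G : SimpleGraph V} [DecidableEq V] {T S : Finset V}
    (hT : IsTriangle G T) (hS : IsOCT G ↑S) : (S ∩ T).Nonempty := by
  by_contra hST
  have hTS : ∀ v ∈ T, v ∈ (↑S : Set V)ᶜ := fun v hv hvS =>
    hST ⟨v, mem_inter.mpr ⟨hvS, hv⟩⟩
  have h3 : Nat.card T ≤ 2 :=
    hS.card_le_of_pairwise_adj (fun v : T => ⟨v, hTS v v.2⟩)
      fun u v huv => hT.2 u u.2 v v.2 (Subtype.coe_ne_coe.mpr huv)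
  simp [hT.1] at h3

theorem IsPacking.card_biUnion [DecidableEq V] {𝒯 : Finset (Finset V)} (hpack : IsPacking 𝒯)
    {k : ℕ} (hk : ∀ T ∈ 𝒯, #T = k) : #(𝒯.biUnion id) = #𝒯 * k := by
  rw [Finset.card_biUnion (t := id) hpack]
  exact sum_const_nat hk

theorem IsPacking.card_le_card_inter_biUnion [DecidableEq V] {𝒯 : Finset (Finset V)}
    (hpack : IsPacking 𝒯) {S : Finset V} (hmeet : ∀ T ∈ 𝒯, (S ∩ T).Nonempty) :
    #𝒯 ≤ #(S ∩ 𝒯.biUnion id) := by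
  have hdisj : (𝒯 : Set (Finset V)).PairwiseDisjoint (S ∩ ·) := fun A hA B hB hAB =>
    (hpack hA hB hAB).mono inter_subset_right inter_subset_right
  rw [inter_biUnion, Finset.card_biUnion (by exact hdisj), card_eq_sum_ones]
  exact sum_le_sum fun T hT => (hmeet T hT).card_pos

theorem IsOCT.card_sdiff_biUnion_add_card_le [DecidableEq V] {G : SimpleGraph V}
    {S : Finset V} (hS : IsOCT G ↑S) {𝒯 : Finset (Finset V)} (h𝒯 : ∀ T ∈ 𝒯, IsTriangle G T)
    (hpack : IsPacking 𝒯) : #(S \ 𝒯.biUnion id) + #𝒯 ≤ #S := by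
  have hmeet := hpack.card_le_card_inter_biUnion fun T hT => (h𝒯 T hT).nonempty_inter_of_isOCT hS
  have := card_sdiff_add_card_inter S (𝒯.biUnion id)
  omega

end

theorem stmt3_general {V : Type*} [DecidableEq V] (G : SimpleGraph V)
    (opt : ℕ) (hoptex : ∃ S : Finset V, IsOCT G ↑S ∧ S.card = opt)
    (a ρ₀ : ℝ) (hρ₀ : 1 ≤ ρ₀)
    (𝒯 : Finset (Finset V)) (h𝒯 : ∀ T ∈ 𝒯, IsTriangle G T) (hpack : IsPacking 𝒯)
    (ha : (𝒯.card : ℝ) = a * opt)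
    (X₁ : Finset V) (hdisj : Disjoint X₁ (𝒯.biUnion id))
    (hX₁ : IsOCT G ↑(X₁ ∪ 𝒯.biUnion id))
    (opt' : ℕ)
    (hopt'min : ∀ S' : Finset V, Disjoint S' (𝒯.biUnion id) →
      IsOCT G ↑(S' ∪ 𝒯.biUnion id) → opt' ≤ S'.card)
    (happx : (X₁.card : ℝ) ≤ ρ₀ * opt') :
    IsOCT G ↑(𝒯.biUnion id ∪ X₁) ∧
      (((𝒯.biUnion id ∪ X₁).card : ℝ) ≤ (3 * a + ρ₀ * (1 - a)) * opt) := by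
  set W := 𝒯.biUnion id
  refine ⟨by rwa [union_comm], ?_⟩
  obtain ⟨S, hS, rfl⟩ := hoptex
  have hrestrict : IsOCT G ↑(S \ W ∪ W) :=
    hS.mono (by rw [sdiff_union_self_eq_union, coe_union]; exact Set.subset_union_left)
  have hopt' : opt' + #𝒯 ≤ #S :=
    (Nat.add_le_add_right (hopt'min _ sdiff_disjoint hrestrict) _).trans
      (hS.card_sdiff_biUnion_add_card_le h𝒯 hpack)
  have hX₁ : (#X₁ : ℝ) ≤ ρ₀ * (#S - #𝒯) :=
    happx.trans <| mul_le_mul_of_nonneg_left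
      (by rw [le_sub_iff_add_le]; exact_mod_cast hopt') (zero_le_one.trans hρ₀)
  have hW : (#(W ∪ X₁) : ℝ) = 3 * #𝒯 + #X₁ := by
    rw [card_union_of_disjoint hdisj.symm, hpack.card_biUnion fun T hT => (h𝒯 T hT).1]
    push_cast
    ring
  rw [ha] at hX₁
  rw [hW, ha]
  linarith

theorem stmt3 {V : Type*} [DecidableEq V] [Fintype V] (G : SimpleGraph V)
    (opt : ℕ) (hoptex : ∃ S : Finset V, IsOCT G ↑S ∧ S.card = opt)
    (hoptmin : ∀ S : Finset V, IsOCT G ↑S → opt ≤ S.card)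
    (a ρ₀ : ℝ) (hρ₀ : 1 ≤ ρ₀)
    (𝒯 : Finset (Finset V)) (h𝒯 : ∀ T ∈ 𝒯, IsTriangle G T) (hpack : IsPacking 𝒯)
    (ha : (𝒯.card : ℝ) = a * opt)
    (X₁ : Finset V) (hdisj : Disjoint X₁ (𝒯.biUnion id))
    (hX₁ : IsOCT G ↑(X₁ ∪ 𝒯.biUnion id))
    (opt' : ℕ)
    (hopt'ex : ∃ S' : Finset V, Disjoint S' (𝒯.biUnion id) ∧
      IsOCT G ↑(S' ∪ 𝒯.biUnion id) ∧ S'.card = opt')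
    (hopt'min : ∀ S' : Finset V, Disjoint S' (𝒯.biUnion id) →
      IsOCT G ↑(S' ∪ 𝒯.biUnion id) → opt' ≤ S'.card)
    (happx : (X₁.card : ℝ) ≤ ρ₀ * opt') :
    IsOCT G ↑(𝒯.biUnion id ∪ X₁) ∧
      (((𝒯.biUnion id ∪ X₁).card : ℝ) ≤ (3 * a + ρ₀ * (1 - a)) * opt) :=
  stmt3_general G opt hoptex a ρ₀ hρ₀ 𝒯 h𝒯 hpack ha X₁ hdisj hX₁ opt' hopt'min happx
end

section
/- Every K₄-free disk graph is 11-degenerate; that is, every nonempty induced subgraph of a K₄-free disk graph has a vertex of degree at most 11. -/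
open Finset

/-!
Let `v` be a disk of smallest radius in `A`. If two neighbours `a`, `b` of `v` are seen from the
centre of `v` under an angle of at most `π / 3`, the law of cosines together with
`r v ≤ r a, r b` gives `|c a - c b| ≤ r a + r b`, so `a` and `b` are adjacent; as the graph is
`K₄`-free, no three neighbours of `v` are pairwise that close. Cut the circle into six half-open
arcs of length `π / 3`, the first of them ending at the direction of a neighbour `w`. Each arc
holds at most two neighbours, and the arc just after `w` at most one, since its points are also
close to `w`. Hence `v` has at most `11` neighbours.
-/

open Real

namespace SimpleGraph

theorem CliqueFree.card_lt_of_isClique_of_forall_adj {V : Type*} [DecidableEq V]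
    {G : SimpleGraph V} {n : ℕ} (hG : G.CliqueFree (n + 1)) {v : V} {t : Finset V}
    (ht : G.IsClique (t : Set V)) (hv : ∀ u ∈ t, G.Adj v u) : t.card < n := by
  by_contra! hn
  obtain ⟨s, hst, hs⟩ := Finset.exists_subset_card_eq hn
  exact hG _ ((IsNClique.mk (ht.subset hst) hs).insert fun u hu => hv u (hst hu))

end SimpleGraph

theorem cliqueFree_four_of_forall_not_isK4 {V : Type*} {G : SimpleGraph V}
    (hG : ∀ K : Finset V, ¬ IsK4 G K) : G.CliqueFree 4 :=
  fun K hK => hG K ⟨hK.card_eq, fun _ hu _ hv huv => hK.isClique hu hv huv⟩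

theorem Real.half_le_cos_of_abs_le {x : ℝ} (hx : |x| ≤ π / 3) : 1 / 2 ≤ cos x := by
  rw [← cos_abs, ← cos_pi_div_three]
  exact cos_le_cos_of_nonneg_of_le_pi (abs_nonneg x) (by linarith [pi_pos]) hx

theorem norm_sub_le_add_of_norm_mul_norm_le_two_mul_inner {E : Type*}
    [NormedAddCommGroup E] [InnerProductSpace ℝ E] {x y : E} {m s t : ℝ}
    (hs : m ≤ s) (ht : m ≤ t) (hx : ‖x‖ ≤ m + s) (hy : ‖y‖ ≤ m + t)
    (hxy : ‖x‖ * ‖y‖ ≤ 2 * inner ℝ x y) : ‖x - y‖ ≤ s + t := by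
  have hsq : ‖x - y‖ ^ 2 ≤ ‖x‖ ^ 2 + ‖y‖ ^ 2 - ‖x‖ * ‖y‖ := by
    rw [norm_sub_sq_real]; linarith
  have h0x := norm_nonneg x
  have h0y := norm_nonneg y
  refine abs_le_of_sq_le_sq' ?_ (by linarith) |>.2
  nlinarith [mul_nonneg (sub_nonneg.2 hx) h0y, mul_nonneg (sub_nonneg.2 hy) h0x,
    mul_nonneg (sub_nonneg.2 hs) (sub_nonneg.2 ht), mul_nonneg (sub_nonneg.2 hx) (sub_nonneg.2 hy)]

namespace Complex

theorem inner_eq_norm_mul_norm_mul_cos_arg_sub (z w : ℂ) :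
    inner ℝ z w = ‖z‖ * ‖w‖ * Real.cos (arg z - arg w) := by
  rw [Complex.inner, mul_re, conj_re, conj_im, Real.cos_sub, ← norm_mul_cos_arg z,
    ← norm_mul_cos_arg w, ← norm_mul_sin_arg z, ← norm_mul_sin_arg w]
  ring

theorem norm_mul_norm_le_two_mul_inner {z w : ℂ}
    (h : 1 / 2 ≤ ((arg z : Real.Angle) - arg w).cos) : ‖z‖ * ‖w‖ ≤ 2 * inner ℝ z w := by
  rw [← Real.Angle.coe_sub, Real.Angle.cos_coe] at h
  rw [inner_eq_norm_mul_norm_mul_cos_arg_sub]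
  nlinarith [mul_nonneg (norm_nonneg z) (norm_nonneg w)]

theorem dist_le_add_of_half_le_cos_arg_sub {p q₁ q₂ : ℂ} {ρ ρ₁ ρ₂ : ℝ}
    (h₁ : ρ ≤ ρ₁) (h₂ : ρ ≤ ρ₂) (hq₁ : dist q₁ p ≤ ρ + ρ₁) (hq₂ : dist q₂ p ≤ ρ + ρ₂)
    (h : 1 / 2 ≤ ((arg (q₁ - p) : Real.Angle) - arg (q₂ - p)).cos) :
    dist q₁ q₂ ≤ ρ₁ + ρ₂ := by
  rw [dist_eq] at hq₁ hq₂ ⊢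
  simpa using norm_sub_le_add_of_norm_mul_norm_le_two_mul_inner h₁ h₂ hq₁ hq₂
    (norm_mul_norm_le_two_mul_inner h)

end Complex

namespace Real.Angle

/-- `θ` lies in the arc `θ₀ + ((k - 1) π / 3, k π / 3]` for `k = sextant θ₀ θ ∈ [-2, 3]`. -/
noncomputable def sextant (θ₀ θ : Angle) : ℤ := ⌈(θ - θ₀).toReal / (π / 3)⌉

theorem sextant_mem_Icc (θ₀ θ : Angle) : sextant θ₀ θ ∈ Finset.Icc (-2) 3 := by
  have h3 : (0 : ℝ) < π / 3 := by positivity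
  obtain ⟨hlo, hhi⟩ := toReal_mem_Ioc (θ - θ₀)
  rw [Finset.mem_Icc, sextant, Int.le_ceil_iff, Int.ceil_le, lt_div_iff₀ h3, div_le_iff₀ h3]
  push_cast
  constructor <;> linarith

theorem sextant_self (θ : Angle) : sextant θ θ = 0 := by
  simp [sextant]

theorem half_le_cos_sub_of_sextant_eq {θ₀ θ θ' : Angle} (h : sextant θ₀ θ = sextant θ₀ θ') :
    1 / 2 ≤ cos (θ - θ') := by
  have h3 : (0 : ℝ) < π / 3 := by positivity
  obtain ⟨hlo, hhi⟩ := Int.ceil_eq_iff.1 (rfl : sextant θ₀ θ = _)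
  obtain ⟨hlo', hhi'⟩ := Int.ceil_eq_iff.1 h.symm
  rw [lt_div_iff₀ h3] at hlo hlo'
  rw [div_le_iff₀ h3] at hhi hhi'
  have : θ - θ' = ((θ - θ₀).toReal - (θ' - θ₀).toReal : ℝ) := by
    rw [coe_sub, coe_toReal, coe_toReal]; abel
  rw [this, cos_coe]
  exact half_le_cos_of_abs_le (abs_le.2 ⟨by nlinarith, by nlinarith⟩)

theorem half_le_cos_sub_of_sextant_eq_one {θ₀ θ : Angle} (h : sextant θ₀ θ = 1) :
    1 / 2 ≤ cos (θ - θ₀) := by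
  have h3 : (0 : ℝ) < π / 3 := by positivity
  obtain ⟨hlo, hhi⟩ := Int.ceil_eq_iff.1 h
  rw [lt_div_iff₀ h3] at hlo
  rw [div_le_iff₀ h3] at hhi
  push_cast at hlo hhi
  rw [← cos_toReal]
  exact half_le_cos_of_abs_le (abs_le.2 ⟨by linarith, by linarith⟩)

theorem card_lt_six_mul_of_forall_card_le {ι : Type*} [DecidableEq ι] (s : Finset ι)
    (θ : ι → Angle) {k : ℕ} (hk : 0 < k)
    (hs : ∀ t ⊆ s, (∀ i ∈ t, ∀ j ∈ t, 1 / 2 ≤ cos (θ i - θ j)) → t.card ≤ k) :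
    s.card < 6 * k := by
  rcases s.eq_empty_or_nonempty with rfl | ⟨w, hw⟩
  · simpa using hk
  set fiber : ℤ → Finset ι := fun b => s.filter fun i => sextant (θ w) (θ i) = b
  have hsextant {i b} (hi : i ∈ fiber b) : sextant (θ w) (θ i) = b := (mem_filter.1 hi).2
  have hfiber : ∀ b, (fiber b).card ≤ k := fun b =>
    hs _ (filter_subset _ _) fun i hi j hj =>
      half_le_cos_sub_of_sextant_eq ((hsextant hi).trans (hsextant hj).symm)
  have hone : (fiber 1).card + 1 ≤ k := by
    have hw₁ : w ∉ fiber 1 := by simp [fiber, sextant_self]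
    have hclose : ∀ i ∈ fiber 1, 1 / 2 ≤ cos (θ i - θ w) := fun i hi =>
      half_le_cos_sub_of_sextant_eq_one (hsextant hi)
    rw [← card_insert_of_notMem hw₁]
    refine hs _ (insert_subset hw (filter_subset _ _)) ?_
    simp only [mem_insert, forall_eq_or_imp, sub_self, cos_zero]
    refine ⟨⟨by norm_num, fun j hj => ?_⟩, fun i hi => ⟨hclose i hi, fun j hj => ?_⟩⟩
    · rw [← cos_neg, neg_sub]; exact hclose j hj
    · exact half_le_cos_sub_of_sextant_eq ((hsextant hi).trans (hsextant hj).symm)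
  have hrest : ∑ b ∈ (Icc (-2) 3).erase 1, (fiber b).card ≤ 5 * k := by
    calc _ ≤ ((Icc (-2 : ℤ) 3).erase 1).card • k :=
          sum_le_card_nsmul _ _ k fun b _ => hfiber b
      _ = 5 * k := by rw [smul_eq_mul]; rfl
  calc s.card = ∑ b ∈ Icc (-2) 3, (fiber b).card :=
        card_eq_sum_card_fiberwise fun i _ => sextant_mem_Icc _ _
    _ = (fiber 1).card + ∑ b ∈ (Icc (-2) 3).erase 1, (fiber b).card :=
        (add_sum_erase _ _ (by decide)).symm
    _ < 6 * k := by omega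

end Real.Angle

theorem stmt5_general {V : Type*} [Fintype V]
    (c : V → EuclideanSpace ℝ (Fin 2)) (r : V → ℝ)
    (G : SimpleGraph V)
    (hG : ∀ u v, G.Adj u v ↔ u ≠ v ∧ dist (c u) (c v) ≤ r u + r v)
    (hK4 : ∀ K : Finset V, ¬ IsK4 G K) :
    ∀ A : Set V, A.Nonempty → ∃ v ∈ A, ({u | u ∈ A ∧ G.Adj v u}).ncard ≤ 11 := by
  classical
  intro A hA
  obtain ⟨v, hvA, hvmin⟩ := Set.exists_min_image A r A.toFinite hA
  refine ⟨v, hvA, ?_⟩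
  set N := univ.filter fun u => u ∈ A ∧ G.Adj v u
  have hN : {u | u ∈ A ∧ G.Adj v u} = N := by ext; simp [N]
  let p : V → ℂ := fun u => Complex.orthonormalBasisOneI.repr.symm (c u)
  have hp : ∀ u w, dist (p u) (p w) = dist (c u) (c w) := fun _ _ =>
    LinearIsometryEquiv.dist_map _ _ _
  have hclose : ∀ t ⊆ N, (∀ a ∈ t, ∀ b ∈ t,
      1 / 2 ≤ ((Complex.arg (p a - p v) : Real.Angle) - Complex.arg (p b - p v)).cos) →
      G.IsClique (t : Set V) := by
    intro t ht h a ha b hb hab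
    have hAdj : ∀ u ∈ t, u ∈ A ∧ G.Adj v u := fun u hu => (mem_filter.1 (ht hu)).2
    have hdist : ∀ u ∈ t, dist (p u) (p v) ≤ r v + r u := fun u hu => by
      rw [hp, dist_comm]; exact ((hG v u).1 (hAdj u hu).2).2
    refine (hG a b).2 ⟨hab, ?_⟩
    rw [← hp]
    exact Complex.dist_le_add_of_half_le_cos_arg_sub (hvmin a (hAdj a ha).1)
      (hvmin b (hAdj b hb).1) (hdist a ha) (hdist b hb) (h a ha b hb)
  have hcard := Real.Angle.card_lt_six_mul_of_forall_card_le N _ two_pos fun t ht h =>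
    Nat.le_of_lt_succ <| (cliqueFree_four_of_forall_not_isK4 hK4)
      |>.card_lt_of_isClique_of_forall_adj (hclose t ht h) fun u hu => (mem_filter.1 (ht hu)).2.2
  rw [hN, Set.ncard_coe_finset]
  omega

theorem stmt5 {V : Type*} [Fintype V]
    (c : V → EuclideanSpace ℝ (Fin 2)) (r : V → ℝ) (hr : ∀ v, 0 < r v)
    (G : SimpleGraph V)
    (hG : ∀ u v, G.Adj u v ↔ u ≠ v ∧ dist (c u) (c v) ≤ r u + r v)
    (hK4 : ∀ K : Finset V, ¬ IsK4 G K) :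
    ∀ A : Set V, A.Nonempty → ∃ v ∈ A, ({u | u ∈ A ∧ G.Adj v u}).ncard ≤ 11 :=
  stmt5_general c r G hG hK4
end

section
/- Let G be a graph, 𝒯 a triangle packing in G, R ⊆ V(𝒯), and 𝒯' a triangle packing of G − R. Let opt be the minimum OCT size of G, a = |𝒯|/opt, and b = tri(𝒪)/opt where 𝒪 is the set of triangles of G with at least one vertex outside V(𝒯) and tri denotes maximum packing size. Let D ⊆ V(𝒯) ∖ R be a set of vertices each of which lies in no triangle of G[V(𝒯) ∖ R]. Then |𝒯'| ≤ (a + b)·opt − |R|/3 − |D|/3. -/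
open Finset

/-- A graph is `c`-degenerate: every nonempty (induced sub)set of vertices contains a
vertex with at most `c` neighbors inside the set. -/
def Degenerate {V : Type*} (G : SimpleGraph V) (c : ℕ) : Prop :=
  ∀ A : Finset V, A.Nonempty → ∃ v ∈ A, ({u | u ∈ A ∧ G.Adj v u}).ncard ≤ c

theorem stmt17 {V : Type*} [DecidableEq V] [Fintype V] (G : SimpleGraph V)
    (opt : ℕ) (hoptex : ∃ S : Finset V, IsOCT G ↑S ∧ S.card = opt)
    (hoptmin : ∀ S : Finset V, IsOCT G ↑S → opt ≤ S.card)
    (a b : ℝ)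
    (𝒯 : Finset (Finset V)) (h𝒯 : ∀ T ∈ 𝒯, IsTriangle G T) (hpack : IsPacking 𝒯)
    (ha : (𝒯.card : ℝ) = a * opt)
    (R : Finset V) (hR : R ⊆ 𝒯.biUnion id)
    (𝒯' : Finset (Finset V)) (h𝒯' : ∀ T ∈ 𝒯', IsTriangle G T ∧ Disjoint T R)
    (hpack' : IsPacking 𝒯')
    (Ps : Finset (Finset V))
    (hPs : ∀ T ∈ Ps, IsTriangle G T ∧ ¬ T ⊆ 𝒯.biUnion id) (hpackPs : IsPacking Ps)
    (hb : (Ps.card : ℝ) = b * opt)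
    (hPsmax : ∀ Qs : Finset (Finset V),
      (∀ T ∈ Qs, IsTriangle G T ∧ ¬ T ⊆ 𝒯.biUnion id) → IsPacking Qs →
        Qs.card ≤ Ps.card)
    (D : Finset V) (hD : D ⊆ 𝒯.biUnion id) (hDR : Disjoint D R)
    (hdead : ∀ v ∈ D, ∀ T : Finset V, IsTriangle G T → T ⊆ 𝒯.biUnion id →
      Disjoint T R → v ∉ T) :
    (𝒯'.card : ℝ) ≤ (a + b) * opt - R.card / 3 - D.card / 3 := by

  classical
  set Vt := 𝒯.biUnion id with hVt
  have hcardVt : Vt.card = 3 * 𝒯.card := by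
    rw [hVt, Finset.card_biUnion (t := id) (fun x hx y hy hxy => hpack hx hy hxy)]
    have : ∑ u ∈ 𝒯, (id u).card = ∑ u ∈ 𝒯, 3 :=
      Finset.sum_congr rfl (fun T hT => (h𝒯 T hT).1)
    rw [this]; simp [mul_comm]
  set A := 𝒯'.filter (fun T => T ⊆ Vt) with hA
  set B := 𝒯'.filter (fun T => ¬ T ⊆ Vt) with hB
  have hsplit : A.card + B.card = 𝒯'.card :=
    Finset.card_filter_add_card_filter_not _
  have hBbound : B.card ≤ Ps.card := by
    apply hPsmax
    · intro T hT
      rw [hB, Finset.mem_filter] at hT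
      exact ⟨(h𝒯' T hT.1).1, hT.2⟩
    · refine hpack'.mono ?_
      intro x hx
      simp only [hB, Finset.coe_filter, Set.mem_setOf_eq] at hx
      exact hx.1
  have hAsub : A.biUnion id ⊆ Vt \ (R ∪ D) := by
    intro v hv
    simp only [Finset.mem_biUnion, id] at hv
    obtain ⟨T, hT, hvT⟩ := hv
    rw [hA, Finset.mem_filter] at hT
    refine Finset.mem_sdiff.mpr ⟨hT.2 hvT, ?_⟩
    intro hvRD
    rcases Finset.mem_union.mp hvRD with h | h
    · exact Finset.disjoint_left.mp (h𝒯' T hT.1).2 hvT h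
    · exact hdead v h T (h𝒯' T hT.1).1 hT.2 (h𝒯' T hT.1).2 hvT
  have hApack : ∀ x ∈ A, ∀ y ∈ A, x ≠ y → Disjoint (id x) (id y) := by
    intro x hx y hy hxy
    rw [hA, Finset.mem_filter] at hx hy
    exact hpack' hx.1 hy.1 hxy
  have hcardA : 3 * A.card = (A.biUnion id).card := by
    rw [Finset.card_biUnion hApack]
    have : ∑ u ∈ A, (id u).card = ∑ u ∈ A, 3 :=
      Finset.sum_congr rfl (fun T hT => (h𝒯' T (Finset.mem_of_mem_filter T hT)).1.1)
    rw [this]; simp [mul_comm]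
  have hRDsub : R ∪ D ⊆ Vt := Finset.union_subset hR hD
  have hcardRD : (R ∪ D).card = R.card + D.card := by
    rw [Finset.card_union_of_disjoint hDR.symm]
  have hsd : (Vt \ (R ∪ D)).card + (R ∪ D).card = Vt.card := by
    rw [Finset.card_sdiff_add_card_eq_card hRDsub]
  have hAle : 3 * A.card ≤ (Vt \ (R ∪ D)).card := by
    rw [hcardA]; exact Finset.card_le_card hAsub
  have key : 3 * A.card + R.card + D.card ≤ 3 * 𝒯.card := by omega
  have keyR : (3 : ℝ) * A.card + R.card + D.card ≤ 3 * 𝒯.card := by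
    exact_mod_cast key
  have hBR : (B.card : ℝ) ≤ b * opt := by rw [← hb]; exact_mod_cast hBbound
  have hTsplit : (𝒯'.card : ℝ) = A.card + B.card := by exact_mod_cast hsplit.symm
  rw [hTsplit]
  have h3 : (3 : ℝ) * (𝒯.card : ℝ) = 3 * (a * opt) := by rw [ha]
  linarith
end
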